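/- For $z > 0$, the one-dimensional operator identity on $L^2(\mathbb{R})$ holds: $e^{-\frac{1}{2}\tanh(z)x^2}\, e^{\frac{1}{2}\sinh(2z)\partial_x^2}\, e^{-\frac{1}{2}\tanh(z)x^2} = e^{-z(x^2 - \partial_x^2)}$, where $x^2$ denotes multiplication by $x^2$ and $x^2 - \partial_x^2$ is the quantum harmonic oscillator. Equivalently, for any $c > 0$: $e^{-\frac{1}{2}cx^2}e^{c\partial_x^2}e^{-\frac{1}{2}cx^2} = e^{-\mathrm{argsh}(c)[\sqrt{1+c^2}\,x^2 - (1+c^2)^{-1/2}\partial_x^2]}$. -/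

import Mathlib

open MeasureTheory

/-- The (unnormalized) `n`-th Hermite function `H_n(x) e^{-x²/2}`, eigenfunction of the
harmonic oscillator `x² - ∂²_x` with eigenvalue `2n+1`.  Here `H_n(x) ∝ He_n(√2 x)`. -/
noncomputable def hermiteFn (n : ℕ) (x : ℝ) : ℝ :=
  (Polynomial.aeval (Real.sqrt 2 * x)) (Polynomial.hermite n) * Real.exp (-x ^ 2 / 2)

/-- The heat semigroup `e^{t ∂²_x}`, given by convolution with the Gaussian heat kernel. -/
noncomputable def heatOp (t : ℝ) (g : ℝ → ℝ) (x : ℝ) : ℝ :=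
  ∫ y : ℝ, (Real.sqrt (4 * Real.pi * t))⁻¹ * Real.exp (-(x - y) ^ 2 / (4 * t)) * g y


section MehlerHelpers
open Polynomial Filter Real
set_option maxRecDepth 8000

noncomputable def Hp (n : ℕ) : Polynomial ℝ := (Polynomial.hermite n).map (algebraMap ℤ ℝ)

lemma He_aeval (n : ℕ) (x : ℝ) : (Polynomial.aeval x) (Polynomial.hermite n) = (Hp n).eval x := by
  rw [Hp, eval_map, aeval_def]

lemma derivative_hermite (n : ℕ) :
    derivative (hermite (n+1)) = (n+1 : ℤ[X]) * hermite n := by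
  induction n with
  | zero => simp [hermite_one, hermite_zero]
  | succ n ih =>
    rw [hermite_succ (n+1)]
    rw [derivative_sub, derivative_mul, derivative_X, ih]
    rw [derivative_mul, hermite_succ n]
    simp only [Polynomial.derivative_natCast, Polynomial.derivative_add,
      Polynomial.derivative_one, derivative_natCast]
    push_cast
    ring


lemma eval_map_derivative (n : ℕ) (x : ℝ) :
    ((derivative (hermite n)).map (algebraMap ℤ ℝ)).eval x = n * (Hp (n-1)).eval x := by
  cases n with
  | zero => simp [hermite_zero]
  | succ n =>
    rw [derivative_hermite]
    push_cast
    simp [Hp]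

lemma eval_derivative_Hp (n : ℕ) (x : ℝ) :
    (derivative (Hp n)).eval x = n * (Hp (n-1)).eval x := by
  rw [Hp, derivative_map, eval_map_derivative]

lemma hasDerivAt_Hp (n : ℕ) (x : ℝ) :
    HasDerivAt (fun x => (Hp n).eval x) ((n : ℝ) * (Hp (n-1)).eval x) x := by
  simpa [eval_derivative_Hp] using (Hp n).hasDerivAt x

lemma Hp_succ_eval (n : ℕ) (x : ℝ) :
    (Hp (n+1)).eval x = x * (Hp n).eval x - n * (Hp (n-1)).eval x := by
  rw [Hp, hermite_succ, Polynomial.map_sub, Polynomial.map_mul, map_X, eval_sub, eval_mul, eval_X,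
    eval_map_derivative]
  rfl

lemma tendsto_poly_gauss_atTop (A : ℝ) (hA : 0 < A) (p : Polynomial ℝ) :
    Tendsto (fun u : ℝ => p.eval u * Real.exp (-(A * u ^ 2))) atTop (nhds 0) := by
  have h1 : Tendsto (fun x : ℝ => (p.comp (Polynomial.C A⁻¹ * X)).eval x / Real.exp x)
      atTop (nhds 0) := Polynomial.tendsto_div_exp_atTop _
  have h2 : Tendsto (fun u : ℝ => A * u) atTop atTop :=
    Tendsto.const_mul_atTop hA tendsto_id
  have h3 : Tendsto (fun u : ℝ => p.eval u / Real.exp (A * u)) atTop (nhds 0) := by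
    have := h1.comp h2
    refine this.congr fun u => ?_
    simp only [Function.comp_apply, eval_comp, eval_mul, eval_C, eval_X]
    rw [inv_mul_cancel_left₀ hA.ne']
  have h3' : Tendsto (fun u : ℝ => |p.eval u / Real.exp (A * u)|) atTop (nhds 0) := by
    simpa using h3.abs
  apply squeeze_zero_norm' ?_ h3'
  filter_upwards [eventually_ge_atTop (1 : ℝ)] with u hu
  rw [Real.norm_eq_abs, abs_mul, abs_div, abs_of_pos (Real.exp_pos _),
    Real.abs_exp, div_eq_mul_inv, ← Real.exp_neg]
  have : Real.exp (-(A * u ^ 2)) ≤ Real.exp (-(A * u)) := by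
    apply Real.exp_le_exp.2
    nlinarith [mul_le_mul_of_nonneg_left (by nlinarith : u ≤ u ^ 2) hA.le]
  exact mul_le_mul_of_nonneg_left this (abs_nonneg _)

lemma tendsto_poly_gauss_atBot (A : ℝ) (hA : 0 < A) (p : Polynomial ℝ) :
    Tendsto (fun u : ℝ => p.eval u * Real.exp (-(A * u ^ 2))) atBot (nhds 0) := by
  have h := (tendsto_poly_gauss_atTop A hA (p.comp (-X))).comp tendsto_neg_atBot_atTop
  refine h.congr fun u => ?_
  simp [Function.comp_apply, eval_comp]

lemma bdd_of_tendsto {f : ℝ → ℝ} (hc : Continuous f)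
    (h1 : Tendsto f atTop (nhds 0)) (h2 : Tendsto f atBot (nhds 0)) :
    ∃ C, ∀ x, |f x| ≤ C := by
  have e1 : ∀ᶠ x in atTop, |f x| ≤ 1 := by
    have := h1.abs
    simp only [abs_zero] at this
    exact this.eventually_le_const one_pos
  have e2 : ∀ᶠ x in atBot, |f x| ≤ 1 := by
    have := h2.abs
    simp only [abs_zero] at this
    exact this.eventually_le_const one_pos
  obtain ⟨b, hb⟩ := eventually_atTop.1 e1
  obtain ⟨a, ha⟩ := eventually_atBot.1 e2
  obtain ⟨C, hC⟩ := (isCompact_Icc (a := a) (b := b)).exists_bound_of_continuousOn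
    hc.continuousOn
  refine ⟨max C 1, fun x => ?_⟩
  rcases le_total x a with h | h
  · exact (ha x h).trans (le_max_right _ _)
  rcases le_total x b with h' | h'
  · exact (hC x ⟨h, h'⟩).trans (le_max_left _ _)
  · exact (hb x h').trans (le_max_right _ _)

lemma integrable_gauss_poly (A : ℝ) (hA : 0 < A) (p : Polynomial ℝ) :
    Integrable (fun u : ℝ => Real.exp (-(A * u ^ 2)) * p.eval u) := by
  have hA2 : 0 < A / 2 := by linarith
  obtain ⟨C, hC⟩ := bdd_of_tendsto
    (f := fun u => p.eval u * Real.exp (-(A / 2 * u ^ 2)))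
    (p.continuous_aeval.mul (Real.continuous_exp.comp (by fun_prop))) (tendsto_poly_gauss_atTop _ hA2 p) (tendsto_poly_gauss_atBot _ hA2 p)
  refine Integrable.mono' ((integrable_exp_neg_mul_sq hA2).const_mul C)
    ?_ ?_
  · exact ((Real.continuous_exp.comp (by continuity)).mul p.continuous_aeval).aestronglyMeasurable
  · filter_upwards with u
    have key : Real.exp (-(A * u ^ 2)) = Real.exp (-(A / 2 * u ^ 2)) * Real.exp (-(A / 2 * u ^ 2)) := by
      rw [← Real.exp_add]; ring_nf
    rw [Real.norm_eq_abs, abs_mul, Real.abs_exp, key]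
    have : Real.exp (-(A / 2 * u ^ 2)) * Real.exp (-(A / 2 * u ^ 2)) * |p.eval u|
        = |p.eval u| * Real.exp (-(A / 2 * u ^ 2)) * Real.exp (-(A / 2 * u ^ 2)) := by ring
    rw [this]
    calc |p.eval u| * Real.exp (-(A / 2 * u ^ 2)) * Real.exp (-(A / 2 * u ^ 2))
        ≤ C * Real.exp (-(A / 2 * u ^ 2)) := by
          refine mul_le_mul_of_nonneg_right ?_ (Real.exp_pos _).le
          have := hC u
          rwa [abs_mul, Real.abs_exp] at this
      _ = C * Real.exp (-(A / 2) * u ^ 2) := by ring_nf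

lemma integral_deriv_zero (f f' : ℝ → ℝ) (h : ∀ x, HasDerivAt f (f' x) x)
    (hi : Integrable f') (hb : Tendsto f atBot (nhds 0)) (ht : Tendsto f atTop (nhds 0)) :
    ∫ x : ℝ, f' x = 0 := by
  rw [← intervalIntegral.integral_Iic_add_Ioi (b := (0:ℝ)) hi.integrableOn hi.integrableOn]
  rw [integral_Iic_of_hasDerivAt_of_tendsto (h 0).continuousAt.continuousWithinAt
      (fun x _ => h x) hi.integrableOn hb,
    integral_Ioi_of_hasDerivAt_of_tendsto (h 0).continuousAt.continuousWithinAt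
      (fun x _ => h x) hi.integrableOn ht]
  ring

lemma integrable_gauss_He (A : ℝ) (hA : 0 < A) (k : ℕ) (β v : ℝ) :
    Integrable (fun u : ℝ => Real.exp (-(A * u ^ 2)) * (Hp k).eval (β * u + v)) := by
  refine (integrable_gauss_poly A hA ((Hp k).comp (Polynomial.C β * X + Polynomial.C v))).congr
    (Eventually.of_forall fun u => ?_)
  simp only [eval_comp, eval_add, eval_mul, eval_C, eval_X]

lemma integrable_gauss_He' (A : ℝ) (hA : 0 < A) (k : ℕ) (β v : ℝ) :
    Integrable (fun u : ℝ => Real.exp (-(A * u ^ 2)) * (u * (Hp k).eval (β * u + v))) := by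
  refine (integrable_gauss_poly A hA
    (X * ((Hp k).comp (Polynomial.C β * X + Polynomial.C v)))).congr
    (Eventually.of_forall fun u => ?_)
  simp only [eval_comp, eval_add, eval_mul, eval_C, eval_X]

lemma tendsto_gauss_He (A : ℝ) (hA : 0 < A) (k : ℕ) (β v : ℝ) :
    Tendsto (fun u : ℝ => Real.exp (-(A * u ^ 2)) * (Hp k).eval (β * u + v)) atTop (nhds 0) ∧
    Tendsto (fun u : ℝ => Real.exp (-(A * u ^ 2)) * (Hp k).eval (β * u + v)) atBot (nhds 0) := by
  constructor
  · refine (tendsto_poly_gauss_atTop A hA ((Hp k).comp (Polynomial.C β * X + Polynomial.C v))).congr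
      fun u => ?_
    simp only [eval_comp, eval_add, eval_mul, eval_C, eval_X]
    ring
  · refine (tendsto_poly_gauss_atBot A hA ((Hp k).comp (Polynomial.C β * X + Polynomial.C v))).congr
      fun u => ?_
    simp only [eval_comp, eval_add, eval_mul, eval_C, eval_X]
    ring

lemma gauss_moment (A β v : ℝ) (hA : 0 < A) (n : ℕ) :
    (2 * A) * ∫ u : ℝ, Real.exp (-(A * u ^ 2)) * (u * (Hp n).eval (β * u + v))
      = β * n * ∫ u : ℝ, Real.exp (-(A * u ^ 2)) * (Hp (n-1)).eval (β * u + v) := by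
  set f : ℝ → ℝ := fun u => Real.exp (-(A * u ^ 2)) * (Hp n).eval (β * u + v) with hf
  set f' : ℝ → ℝ := fun u =>
    (-(2 * A)) * (Real.exp (-(A * u ^ 2)) * (u * (Hp n).eval (β * u + v)))
      + (β * n) * (Real.exp (-(A * u ^ 2)) * (Hp (n-1)).eval (β * u + v)) with hf'
  have hderiv : ∀ u, HasDerivAt f (f' u) u := by
    intro u
    have hexp : HasDerivAt (fun u : ℝ => Real.exp (-(A * u ^ 2)))
        (Real.exp (-(A * u ^ 2)) * (-(A * (2 * u)))) u := by
      have h1 : HasDerivAt (fun u : ℝ => -(A * u ^ 2)) (-(A * (2 * u))) u := by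
        exact (by simpa using ((hasDerivAt_pow 2 u).const_mul A).neg :
          HasDerivAt (-fun y : ℝ => A * y ^ 2) (-(A * (2 * u))) u)
      exact h1.exp
    have hlin : HasDerivAt (fun u : ℝ => β * u + v) β u := by
      simpa using ((hasDerivAt_id u).const_mul β).add_const v
    have hcomp : HasDerivAt (fun u : ℝ => (Hp n).eval (β * u + v))
        (((n : ℝ) * (Hp (n-1)).eval (β * u + v)) * β) u :=
      by have := (hasDerivAt_Hp n (β * u + v)).comp u hlin; exact this
    have := hexp.mul hcomp
    refine (this : HasDerivAt f _ u).congr_deriv ?_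
    simp only [hf']
    ring
  have hint : Integrable f' := by
    refine (((integrable_gauss_He' A hA n β v).const_mul _).add
      ((integrable_gauss_He A hA (n-1) β v).const_mul _))
  have h0 : ∫ u : ℝ, f' u = 0 :=
    integral_deriv_zero f f' hderiv hint (tendsto_gauss_He A hA n β v).2
      (tendsto_gauss_He A hA n β v).1
  rw [hf'] at h0
  rw [integral_add ((integrable_gauss_He' A hA n β v).const_mul _)
      ((integrable_gauss_He A hA (n-1) β v).const_mul _),
    integral_const_mul, integral_const_mul] at h0
  linarith

lemma J_eq (A β γ : ℝ) (hA : 0 < A) (hγ : 0 < γ) (hk : β ^ 2 = 2 * A * (1 - γ ^ 2)) :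
    ∀ n : ℕ, ∀ v : ℝ, (∫ u : ℝ, Real.exp (-(A * u ^ 2)) * (Hp n).eval (β * u + v))
      = Real.sqrt (Real.pi / A) * γ ^ n * (Hp n).eval (v / γ) := by
  intro n
  induction n using Nat.strong_induction_on with
  | _ n ih =>
    match n with
    | 0 =>
      intro v
      have : ∫ u : ℝ, Real.exp (-(A * u ^ 2)) = Real.sqrt (Real.pi / A) := by
        simpa [neg_mul] using integral_gaussian A
      simpa [Hp, hermite_zero] using this
    | (n+1) =>
      intro v
      have hγ' : (γ : ℝ) ≠ 0 := hγ.ne'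
      obtain ⟨w, rfl⟩ : ∃ w, v = w * γ := ⟨v / γ, (div_mul_cancel₀ v hγ').symm⟩
      have ihn := ih n (by omega) (w * γ)
      have ihm := ih (n-1) (by omega) (w * γ)
      have hK := gauss_moment A β (w * γ) hA n
      rw [ihm] at hK
      rw [mul_div_cancel_right₀ w hγ'] at ihn ihm hK
      have i1 : Integrable (fun u : ℝ =>
          β * (Real.exp (-(A * u ^ 2)) * (u * (Hp n).eval (β * u + w * γ)))) :=
        (integrable_gauss_He' A hA n β (w * γ)).const_mul _
      have i2 : Integrable (fun u : ℝ =>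
          (w * γ) * (Real.exp (-(A * u ^ 2)) * (Hp n).eval (β * u + w * γ))) :=
        (integrable_gauss_He A hA n β (w * γ)).const_mul _
      have i3 : Integrable (fun u : ℝ =>
          (n : ℝ) * (Real.exp (-(A * u ^ 2)) * (Hp (n-1)).eval (β * u + w * γ))) :=
        (integrable_gauss_He A hA (n-1) β (w * γ)).const_mul _
      have i12 : Integrable (fun u : ℝ =>
          β * (Real.exp (-(A * u ^ 2)) * (u * (Hp n).eval (β * u + w * γ)))
            + (w * γ) * (Real.exp (-(A * u ^ 2)) * (Hp n).eval (β * u + w * γ))) := i1.add i2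
      have split : (∫ u : ℝ, Real.exp (-(A * u ^ 2)) * (Hp (n+1)).eval (β * u + w * γ))
          = β * (∫ u : ℝ, Real.exp (-(A * u ^ 2)) * (u * (Hp n).eval (β * u + w * γ)))
            + (w * γ) * (∫ u : ℝ, Real.exp (-(A * u ^ 2)) * (Hp n).eval (β * u + w * γ))
            - (n : ℝ) * (∫ u : ℝ, Real.exp (-(A * u ^ 2)) * (Hp (n-1)).eval (β * u + w * γ)) := by
        rw [show (fun u : ℝ => Real.exp (-(A * u ^ 2)) * (Hp (n+1)).eval (β * u + w * γ))
            = fun u : ℝ => β * (Real.exp (-(A * u ^ 2)) * (u * (Hp n).eval (β * u + w * γ)))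
              + (w * γ) * (Real.exp (-(A * u ^ 2)) * (Hp n).eval (β * u + w * γ))
              - (n : ℝ) * (Real.exp (-(A * u ^ 2)) * (Hp (n-1)).eval (β * u + w * γ)) from
          funext fun u => by rw [Hp_succ_eval]; ring]
        rw [integral_sub i12 i3, integral_add i1 i2, integral_const_mul, integral_const_mul,
          integral_const_mul]
      rw [split, ihn, ihm]
      have hpow : (n : ℝ) * γ ^ (n-1) * γ ^ 2 = (n : ℝ) * γ ^ (n+1) := by
        cases n with
        | zero => simp
        | succ m => simp [pow_succ]; ring
      rw [Hp_succ_eval, mul_div_cancel_right₀ w hγ']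
      refine mul_left_cancel₀ (show (2*A : ℝ) ≠ 0 by positivity) ?_
      linear_combination β * hK
        + ((n : ℝ) * Real.sqrt (Real.pi/A) * γ ^ (n-1) * (Hp (n-1)).eval w) * hk
        - (2 * A * Real.sqrt (Real.pi/A) * (Hp (n-1)).eval w) * hpow

lemma core (t α β γ : ℝ) (ht : 0 < t) (hD : 0 < 1 + 2*t*α) (hγ : 0 < γ)
    (hk : 2*t*β^2 = (1+2*t*α)*(1-γ^2)) (n : ℕ) (x : ℝ) :
    (∫ y : ℝ, (Real.sqrt (4*Real.pi*t))⁻¹ * Real.exp (-(x-y)^2/(4*t))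
        * (Real.exp (-(α*y^2)/2) * (Hp n).eval (β*y)))
      = (Real.sqrt (1+2*t*α))⁻¹ * γ^n
          * Real.exp (-(α/(1+2*t*α))*x^2/2) * (Hp n).eval (β*x/((1+2*t*α)*γ)) := by
  have hA : 0 < (1+2*t*α)/(4*t) := by positivity
  have ht' : (t:ℝ) ≠ 0 := ht.ne'
  have hD' : (1+2*t*α) ≠ 0 := hD.ne'
  have key : ∀ y : ℝ, Real.exp (-(x - y) ^ 2 / (4 * t)) * Real.exp (-(α * y ^ 2) / 2)
      = Real.exp (-(α/(1+2*t*α)) * x ^ 2 / 2)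
        * Real.exp (-((1+2*t*α)/(4*t) * (y - x/(1+2*t*α)) ^ 2)) := by
    intro y
    rw [← Real.exp_add, ← Real.exp_add]
    congr 1
    linear_combination (x^2/(4*t) + x^2*(1+2*t*α)⁻¹/(4*t) - 2*x*y/(4*t)) * mul_inv_cancel₀ hD'
      + (y^2*α/2 - x^2*α*(1+2*t*α)⁻¹/2) * mul_inv_cancel₀ ht'
  have step1 : (∫ y : ℝ, (Real.sqrt (4*Real.pi*t))⁻¹ * Real.exp (-(x-y)^2/(4*t))
        * (Real.exp (-(α*y^2)/2) * (Hp n).eval (β*y)))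
      = ((Real.sqrt (4*Real.pi*t))⁻¹ * Real.exp (-(α/(1+2*t*α)) * x ^ 2 / 2))
          * ∫ y : ℝ, Real.exp (-((1+2*t*α)/(4*t) * (y - x/(1+2*t*α)) ^ 2))
              * (Hp n).eval (β*(y - x/(1+2*t*α)) + β*(x/(1+2*t*α))) := by
    rw [← integral_const_mul]
    congr 1
    funext y
    have harg : β*(y - x/(1+2*t*α)) + β*(x/(1+2*t*α)) = β*y := by ring
    rw [harg]
    linear_combination ((Real.sqrt (4*Real.pi*t))⁻¹ * (Hp n).eval (β*y)) * key y
  have step2 : (∫ y : ℝ, Real.exp (-((1+2*t*α)/(4*t) * (y - x/(1+2*t*α)) ^ 2))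
        * (Hp n).eval (β*(y - x/(1+2*t*α)) + β*(x/(1+2*t*α))))
      = ∫ u : ℝ, Real.exp (-((1+2*t*α)/(4*t) * u ^ 2))
          * (Hp n).eval (β*u + β*(x/(1+2*t*α))) := by
    have H := integral_sub_right_eq_self (μ := volume)
      (fun u : ℝ => Real.exp (-((1+2*t*α)/(4*t) * u ^ 2))
        * (Hp n).eval (β*u + β*(x/(1+2*t*α)))) (x/(1+2*t*α))
    simpa using H
  have hk' : β ^ 2 = 2 * ((1+2*t*α)/(4*t)) * (1 - γ ^ 2) := by
    field_simp
    linear_combination 2 * hk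
  rw [step1, step2, J_eq ((1+2*t*α)/(4*t)) β γ hA hγ hk' n (β*(x/(1+2*t*α)))]
  have hπA : Real.pi / ((1+2*t*α)/(4*t)) = (4*Real.pi*t)/(1+2*t*α) := by
    field_simp
  rw [hπA, Real.sqrt_div (by positivity) (1+2*t*α)]
  have h4 : Real.sqrt (4*Real.pi*t) ≠ 0 := by positivity
  have hsD : Real.sqrt (1+2*t*α) ≠ 0 := by positivity
  have harg2 : β*(x/(1+2*t*α))/γ = β*x/((1+2*t*α)*γ) := by
    rw [← mul_div_assoc, div_div]
  rw [harg2]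
  field_simp

lemma part1 (z : ℝ) (hz : 0 < z) (n : ℕ) (x : ℝ) :
    Real.exp (-Real.tanh z * x ^ 2 / 2) *
        heatOp (Real.sinh (2 * z) / 2)
          (fun y => Real.exp (-Real.tanh z * y ^ 2 / 2) * hermiteFn n y) x
      = Real.exp (-z * (2 * n + 1)) * hermiteFn n x := by
  have hsinh : 0 < Real.sinh (2 * z) := by
    rw [Real.sinh_pos_iff]; linarith
  have ht : 0 < Real.sinh (2 * z) / 2 := by linarith
  have hch : Real.cosh z ≠ 0 := (Real.cosh_pos (x := z)).ne'
  have h1 : Real.cosh z + Real.sinh z = Real.exp z := Real.cosh_add_sinh z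
  have h1' : Real.cosh z - Real.sinh z = Real.exp (-z) := Real.cosh_sub_sinh z
  have h2 : Real.cosh z ^ 2 - Real.sinh z ^ 2 = 1 := Real.cosh_sq_sub_sinh_sq z
  have h3 : Real.exp (2 * z) = Real.exp z * Real.exp z := by
    rw [← Real.exp_add]; ring_nf
  have e1 : Real.exp (2 * z) * Real.exp (-(2 * z)) = 1 := by
    rw [← Real.exp_add]; simp
  have htanh1 : Real.tanh z + 1 = Real.exp z / Real.cosh z := by
    rw [Real.tanh_eq_sinh_div_cosh]
    field_simp
    linarith
  have htanh2 : 1 - Real.tanh z = Real.exp (-z) / Real.cosh z := by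
    rw [Real.tanh_eq_sinh_div_cosh]
    field_simp
    linarith
  have hDeq : 1 + 2 * (Real.sinh (2 * z) / 2) * (Real.tanh z + 1) = Real.exp (2 * z) := by
    calc 1 + 2 * (Real.sinh (2 * z) / 2) * (Real.tanh z + 1)
        = 1 + 2 * Real.sinh z * (Real.cosh z * (Real.exp z / Real.cosh z)) := by
          rw [Real.sinh_two_mul, htanh1]; ring
      _ = 1 + 2 * Real.sinh z * Real.exp z := by
          rw [show Real.cosh z * (Real.exp z / Real.cosh z) = Real.exp z from by field_simp]
      _ = Real.exp (2 * z) := by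
          rw [h3, ← h1]
          linear_combination -h2
  have hD : 0 < 1 + 2 * (Real.sinh (2 * z) / 2) * (Real.tanh z + 1) := by
    rw [hDeq]; exact Real.exp_pos _
  have hγ : 0 < Real.exp (-(2 * z)) := Real.exp_pos _
  have hk : 2 * (Real.sinh (2 * z) / 2) * (Real.sqrt 2) ^ 2
      = (1 + 2 * (Real.sinh (2 * z) / 2) * (Real.tanh z + 1)) * (1 - (Real.exp (-(2 * z))) ^ 2) := by
    rw [hDeq, Real.sq_sqrt (by norm_num : (0:ℝ) ≤ 2), Real.sinh_eq]
    linear_combination Real.exp (-(2 * z)) * e1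
  have hint : heatOp (Real.sinh (2 * z) / 2)
        (fun y => Real.exp (-Real.tanh z * y ^ 2 / 2) * hermiteFn n y) x
      = ∫ y : ℝ, (Real.sqrt (4 * Real.pi * (Real.sinh (2 * z) / 2)))⁻¹
          * Real.exp (-(x - y) ^ 2 / (4 * (Real.sinh (2 * z) / 2)))
          * (Real.exp (-((Real.tanh z + 1) * y ^ 2) / 2) * (Hp n).eval (Real.sqrt 2 * y)) := by
    unfold heatOp
    congr 1
    funext y
    simp only [hermiteFn, He_aeval]
    have e2 : Real.exp (-Real.tanh z * y ^ 2 / 2) * Real.exp (-y ^ 2 / 2)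
        = Real.exp (-((Real.tanh z + 1) * y ^ 2) / 2) := by
      rw [← Real.exp_add]; congr 1; ring
    linear_combination ((Real.sqrt (4 * Real.pi * (Real.sinh (2 * z) / 2)))⁻¹
      * Real.exp (-(x - y) ^ 2 / (4 * (Real.sinh (2 * z) / 2)))
      * (Hp n).eval (Real.sqrt 2 * y)) * e2
  rw [hint, core (Real.sinh (2 * z) / 2) (Real.tanh z + 1) (Real.sqrt 2) (Real.exp (-(2 * z)))
    ht hD hγ hk n x, hDeq, e1, div_one]
  have hsq : Real.sqrt (Real.exp (2 * z)) = Real.exp z := by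
    rw [h3, Real.sqrt_mul_self (Real.exp_pos z).le]
  have hαDz : (Real.tanh z + 1) / Real.exp (2 * z) = 1 - Real.tanh z := by
    rw [htanh1, htanh2, h3]
    rw [div_div, div_eq_div_iff (by positivity) (by positivity)]
    rw [show Real.exp (-z) = (Real.exp z)⁻¹ from Real.exp_neg z]
    field_simp
  rw [hsq, hαDz]
  simp only [hermiteFn, He_aeval]
  have hgauss : Real.exp (-Real.tanh z * x ^ 2 / 2) * Real.exp (-(1 - Real.tanh z) * x ^ 2 / 2)
      = Real.exp (-x ^ 2 / 2) := by
    rw [← Real.exp_add]; congr 1; ring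
  have hEn : Real.exp (-z * (2 * (n:ℝ) + 1)) = (Real.exp z)⁻¹ * Real.exp (-(2 * z)) ^ n := by
    rw [← Real.exp_nat_mul, ← Real.exp_neg, ← Real.exp_add]
    congr 1
    ring
  rw [hEn]
  linear_combination ((Real.exp z)⁻¹ * Real.exp (-(2 * z)) ^ n
    * (Hp n).eval (Real.sqrt 2 * x)) * hgauss

lemma part2 (c : ℝ) (hc : 0 < c) (n : ℕ) (x : ℝ) :
    Real.exp (-c * x ^ 2 / 2) *
        heatOp c
          (fun y => Real.exp (-c * y ^ 2 / 2) *
            hermiteFn n (Real.sqrt (Real.sqrt (1 + c ^ 2)) * y)) x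
      = Real.exp (-Real.arsinh c * (2 * n + 1)) *
          hermiteFn n (Real.sqrt (Real.sqrt (1 + c ^ 2)) * x) := by
  have hμpos : 0 < Real.sqrt (1 + c ^ 2) := Real.sqrt_pos.2 (by positivity)
  set μ : ℝ := Real.sqrt (1 + c ^ 2) with hμdef
  set lam : ℝ := Real.sqrt μ with hlamdef
  have hμ2 : μ ^ 2 = 1 + c ^ 2 := Real.sq_sqrt (by positivity)
  have hlam2 : lam ^ 2 = μ := Real.sq_sqrt hμpos.le
  have hcμ : c < μ := by nlinarith
  have hμc : (0:ℝ) < μ + c := by linarith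
  have hμc' : (μ + c) ≠ 0 := hμc.ne'
  have hβ2 : (Real.sqrt 2 * lam) ^ 2 = 2 * μ := by
    rw [mul_pow, Real.sq_sqrt (by norm_num : (0:ℝ) ≤ 2), hlam2]
  have hD : 0 < 1 + 2*c*(c+μ) := by nlinarith
  have hγp : 0 < (μ - c)/(μ + c) := div_pos (by linarith) hμc
  have hk : 2*c*(Real.sqrt 2 * lam)^2 = (1+2*c*(c+μ))*(1-((μ - c)/(μ + c))^2) := by
    rw [hβ2]
    field_simp
    ring_nf
    nlinarith [hμ2]
  -- rewrite the heat integrand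
  have hint : heatOp c (fun y => Real.exp (-c * y ^ 2 / 2) * hermiteFn n (lam * y)) x
      = ∫ y : ℝ, (Real.sqrt (4*Real.pi*c))⁻¹ * Real.exp (-(x-y)^2/(4*c))
          * (Real.exp (-((c+μ)*y^2)/2) * (Hp n).eval ((Real.sqrt 2 * lam)*y)) := by
    unfold heatOp
    congr 1
    funext y
    simp only [hermiteFn, He_aeval]
    rw [ show Real.sqrt 2 * (lam * y) = (Real.sqrt 2 * lam) * y from by ring]
    have e1 : Real.exp (-c * y ^ 2 / 2) * Real.exp (-(lam * y) ^ 2 / 2)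
        = Real.exp (-((c+μ)*y^2)/2) := by
      rw [← Real.exp_add]
      congr 1
      linear_combination (-(y^2)/2 : ℝ) * hlam2
    linear_combination ((Real.sqrt (4*Real.pi*c))⁻¹ * Real.exp (-(x-y)^2/(4*c))
      * (Hp n).eval ((Real.sqrt 2 * lam) * y)) * e1
  rw [hint, core c (c+μ) (Real.sqrt 2 * lam) ((μ - c)/(μ + c)) hc hD hγp hk n x]
  -- numeric simplifications
  have hmul1 : (μ + c) * (μ - c) = 1 := by linear_combination hμ2
  have hinv : (μ + c)⁻¹ = μ - c := inv_eq_of_mul_eq_one_right hmul1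
  have hDeq : 1 + 2*c*(c+μ) = (μ + c)^2 := by linear_combination -hμ2
  have hsD : Real.sqrt (1 + 2*c*(c+μ)) = μ + c := by
    rw [hDeq, Real.sqrt_sq hμc.le]
  have hDγ : (1 + 2*c*(c+μ)) * ((μ - c)/(μ + c)) = 1 := by
    rw [hDeq]
    field_simp
    linear_combination hμ2
  have hαD : (c+μ)/(1 + 2*c*(c+μ)) = μ - c := by
    rw [hDeq, div_eq_iff (pow_ne_zero 2 hμc')]
    linear_combination (-(μ + c)) * hmul1
  rw [hDγ, div_one, hαD, hsD]
  simp only [hermiteFn, He_aeval]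
  rw [show Real.sqrt 2 * (lam * x) = Real.sqrt 2 * lam * x from by ring]
  have hexpar : Real.exp (Real.arsinh c) = μ + c := by
    rw [Real.exp_arsinh, hμdef, add_comm]
  have hγE : (μ - c)/(μ + c) = ((μ + c)⁻¹)^2 := by
    rw [pow_two]
    nth_rewrite 1 [hinv]
    rw [← div_eq_mul_inv]
  have hpw : ((μ - c)/(μ + c))^n = ((μ + c)⁻¹)^(2*n) := by
    rw [hγE, ← pow_mul]
  have hEn : Real.exp (-Real.arsinh c * (2*(n:ℝ)+1)) = ((μ + c)⁻¹)^(2*n+1) := by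
    rw [show -Real.arsinh c * (2*(n:ℝ)+1) = ((2*n+1 : ℕ):ℝ) * (-Real.arsinh c) from by
      push_cast; ring, Real.exp_nat_mul, Real.exp_neg, hexpar]
  have egauss : Real.exp (-c * x ^ 2 / 2) * Real.exp (-(μ - c) * x ^ 2 / 2)
      = Real.exp (-(lam*x)^2/2) := by
    rw [← Real.exp_add]
    congr 1
    linear_combination ((x^2)/2 : ℝ) * hlam2
  rw [hpw, hEn]
  linear_combination (((μ + c)⁻¹)^(2*n+1) * (Hp n).eval (Real.sqrt 2 * lam * x)) * egauss

end MehlerHelpers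

/-- For `z > 0`,
`e^{-tanh(z)x²/2} e^{sinh(2z)∂²/2} e^{-tanh(z)x²/2} = e^{-z(x² - ∂²)}`, where the right-hand
side is characterized by its action on the Hermite eigenbasis; equivalently, for any `c > 0`,
`e^{-cx²/2} e^{c∂²} e^{-cx²/2} = e^{-argsh(c)[√(1+c²)x² - (1+c²)^{-1/2}∂²]}`, whose
eigenfunctions are `ψ_n((1+c²)^{1/4}x)` with eigenvalues `e^{-argsh(c)(2n+1)}`. -/
theorem stmt13 (z : ℝ) (hz : 0 < z) :
    (∀ (n : ℕ) (x : ℝ),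
      Real.exp (-Real.tanh z * x ^ 2 / 2) *
        heatOp (Real.sinh (2 * z) / 2)
          (fun y => Real.exp (-Real.tanh z * y ^ 2 / 2) * hermiteFn n y) x
      = Real.exp (-z * (2 * n + 1)) * hermiteFn n x) ∧
    (∀ c : ℝ, 0 < c → ∀ (n : ℕ) (x : ℝ),
      Real.exp (-c * x ^ 2 / 2) *
        heatOp c
          (fun y => Real.exp (-c * y ^ 2 / 2) *
            hermiteFn n (Real.sqrt (Real.sqrt (1 + c ^ 2)) * y)) x
      = Real.exp (-Real.arsinh c * (2 * n + 1)) *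
          hermiteFn n (Real.sqrt (Real.sqrt (1 + c ^ 2)) * x)) := by
  exact ⟨fun n x => part1 z hz n x, fun c hc n x => part2 c hc n x⟩
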